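/- arXiv:2312.11318 — 3 statements merged into one kernel-verified Lean document; each statement's English description precedes it below -/
import Mathlib

section
/- For all real m with 0 < m ≤ 1 and all σ > 0, we have σ⁻²·m ≤ (σ⁻² / log(1 + σ⁻²)) · log(1 + σ⁻²·m). -/
theorem stmt_0 (m σ : ℝ) (hm0 : 0 < m) (hm1 : m ≤ 1) (hσ : 0 < σ) :
    (σ ^ 2)⁻¹ * m ≤
      (σ ^ 2)⁻¹ / Real.log (1 + (σ ^ 2)⁻¹) * Real.log (1 + (σ ^ 2)⁻¹ * m) := by
  set c : ℝ := (σ ^ 2)⁻¹ with hc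
  have hcpos : 0 < c := by positivity
  have hlogpos : 0 < Real.log (1 + c) := Real.log_pos (by linarith)
  have hbern : (1 + c) ^ m ≤ 1 + m * c :=
    rpow_one_add_le_one_add_mul_self (by linarith) hm0.le hm1
  have hkey : m * Real.log (1 + c) ≤ Real.log (1 + c * m) := by
    have h1 : Real.log ((1 + c) ^ m) = m * Real.log (1 + c) :=
      Real.log_rpow (by linarith) m
    have h2 : Real.log ((1 + c) ^ m) ≤ Real.log (1 + c * m) := by
      apply Real.log_le_log (Real.rpow_pos_of_pos (by linarith) m)
      linarith [hbern, mul_comm m c]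
    linarith
  rw [div_mul_eq_mul_div, le_div_iff₀ hlogpos]
  nlinarith [mul_le_mul_of_nonneg_left hkey hcpos.le]
end

section
/- Let σ > 0 and let β : ℕ → ℝ be nondecreasing with β t ≥ 0, and let s : ℕ → ℝ satisfy 0 < s t ≤ 1 for all t. Define C₁ = 8 / log(1 + σ⁻²). Then for every T, ∑_{t=1}^{T} (2·β t·√(s t))² ≤ C₁ · (β T)² · (1/2)·∑_{t=1}^{T} log(1 + σ⁻²·s t). -/
lemma aux_log_concave {a s : ℝ} (ha : 0 < a) (hs0 : 0 < s) (hs1 : s ≤ 1) :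
    s * Real.log (1 + a) ≤ Real.log (1 + a * s) := by
  have hcc := strictConcaveOn_log_Ioi.concaveOn
  have h := hcc.2 (x := 1 + a) (y := 1) (by simp; linarith) (by simp)
      (le_of_lt hs0) (by linarith : (0:ℝ) ≤ 1 - s) (by ring)
  simp only [smul_eq_mul, Real.log_one, mul_zero, add_zero] at h
  calc s * Real.log (1 + a) ≤ Real.log (s * (1 + a) + (1 - s) * 1) := h
    _ = Real.log (1 + a * s) := by ring_nf

theorem stmt_1 (σ : ℝ) (hσ : 0 < σ) (β : ℕ → ℝ) (hβmono : Monotone β)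
    (hβ : ∀ t, 0 ≤ β t) (s : ℕ → ℝ) (hs0 : ∀ t, 0 < s t) (hs1 : ∀ t, s t ≤ 1)
    (T : ℕ) :
    ∑ t ∈ Finset.Icc 1 T, (2 * β t * Real.sqrt (s t)) ^ 2 ≤
      (8 / Real.log (1 + (σ ^ 2)⁻¹)) * (β T) ^ 2 *
        ((1 / 2) * ∑ t ∈ Finset.Icc 1 T, Real.log (1 + (σ ^ 2)⁻¹ * s t)) := by
  set a := (σ ^ 2)⁻¹ with ha_def
  have ha : 0 < a := by positivity
  have hL : 0 < Real.log (1 + a) := Real.log_pos (by linarith)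
  have key : ∀ t ∈ Finset.Icc 1 T,
      (2 * β t * Real.sqrt (s t)) ^ 2 ≤
        (4 / Real.log (1 + a)) * (β T) ^ 2 * Real.log (1 + a * s t) := by
    intro t ht
    have hβt : β t ≤ β T := hβmono (Finset.mem_Icc.mp ht).2
    have h1 : (2 * β t * Real.sqrt (s t)) ^ 2 = 4 * (β t) ^ 2 * s t := by
      rw [mul_pow, mul_pow, Real.sq_sqrt (hs0 t).le]; ring
    rw [h1]
    have h2 : 4 * (β t) ^ 2 * s t ≤ 4 * (β T) ^ 2 * s t := by
      have := mul_self_le_mul_self (hβ t) hβt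
      nlinarith [(hs0 t).le]
    have h3 := aux_log_concave ha (hs0 t) (hs1 t)
    calc 4 * (β t) ^ 2 * s t ≤ 4 * (β T) ^ 2 * s t := h2
      _ ≤ 4 * (β T) ^ 2 * (Real.log (1 + a * s t) / Real.log (1 + a)) := by
          apply mul_le_mul_of_nonneg_left _ (by positivity)
          rw [le_div_iff₀ hL]; linarith
      _ = (4 / Real.log (1 + a)) * (β T) ^ 2 * Real.log (1 + a * s t) := by
          field_simp
  calc ∑ t ∈ Finset.Icc 1 T, (2 * β t * Real.sqrt (s t)) ^ 2
      ≤ ∑ t ∈ Finset.Icc 1 T, (4 / Real.log (1 + a)) * (β T) ^ 2 * Real.log (1 + a * s t) :=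
        Finset.sum_le_sum key
    _ = (8 / Real.log (1 + a)) * (β T) ^ 2 *
        ((1 / 2) * ∑ t ∈ Finset.Icc 1 T, Real.log (1 + a * s t)) := by
        rw [← Finset.mul_sum]; ring
end

section
/- Let r : ℕ → ℝ be nonnegative, β : ℕ → ℝ nondecreasing and nonnegative, s : ℕ → ℝ with 0 < s t ≤ 1, and σ > 0. Suppose r t ≤ 2·β t·√(s t) for all t ∈ {1,…,T}, and let γ_T ≥ (1/2)∑_{t=1}^T log(1 + σ⁻² s t). Then ∑_{t=1}^T r t ≤ β T · √(C₁·T·γ_T), where C₁ = 8/log(1+σ⁻²). -/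
lemma log_lin_bound {α t : ℝ} (hα : 0 < α) (ht0 : 0 ≤ t) (ht1 : t ≤ 1) :
    t * Real.log (1 + α) ≤ Real.log (1 + t * α) := by
  have hcc : ConcaveOn ℝ (Set.Ioi 0) Real.log := strictConcaveOn_log_Ioi.concaveOn
  have h := hcc.2 (show (1:ℝ) ∈ Set.Ioi 0 by norm_num)
    (show (1:ℝ) + α ∈ Set.Ioi 0 by simp; linarith)
    (show (0:ℝ) ≤ 1 - t by linarith) ht0 (by ring)
  simp only [smul_eq_mul] at h
  have : (1 - t) * 1 + t * (1 + α) = 1 + t * α := by ring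
  rw [this, Real.log_one] at h
  linarith

theorem stmt_2 (σ : ℝ) (hσ : 0 < σ) (T : ℕ) (r β s : ℕ → ℝ)
    (hr : ∀ t, 0 ≤ r t) (hβmono : Monotone β) (hβ : ∀ t, 0 ≤ β t)
    (hs0 : ∀ t, 0 < s t) (hs1 : ∀ t, s t ≤ 1)
    (hrs : ∀ t ∈ Finset.Icc 1 T, r t ≤ 2 * β t * Real.sqrt (s t))
    (γ : ℝ) (hγ : (1 / 2) * ∑ t ∈ Finset.Icc 1 T, Real.log (1 + (σ ^ 2)⁻¹ * s t) ≤ γ) :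
    ∑ t ∈ Finset.Icc 1 T, r t ≤
      β T * Real.sqrt ((8 / Real.log (1 + (σ ^ 2)⁻¹)) * T * γ) := by
  set α := (σ ^ 2)⁻¹ with hαdef
  have hα : 0 < α := by positivity
  have hL : 0 < Real.log (1 + α) := Real.log_pos (by linarith)
  set L := Real.log (1 + α) with hLdef
  set S := ∑ t ∈ Finset.Icc 1 T, r t with hSdef
  have hS0 : 0 ≤ S := Finset.sum_nonneg fun t _ => hr t
  -- Cauchy-Schwarz
  have hCS : S ^ 2 ≤ (T : ℝ) * ∑ t ∈ Finset.Icc 1 T, (r t) ^ 2 := by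
    calc S ^ 2 = (∑ t ∈ Finset.Icc 1 T, 1 * r t) ^ 2 := by simp [hSdef]
      _ ≤ (∑ t ∈ Finset.Icc 1 T, (1:ℝ) ^ 2) * ∑ t ∈ Finset.Icc 1 T, (r t) ^ 2 :=
          Finset.sum_mul_sq_le_sq_mul_sq _ _ _
      _ ≤ (T : ℝ) * ∑ t ∈ Finset.Icc 1 T, (r t) ^ 2 := by
          simp [Nat.card_Icc]
  -- bound each r t ^ 2
  have hsum : ∑ t ∈ Finset.Icc 1 T, (r t) ^ 2
      ≤ (4 * β T ^ 2 / L) * ∑ t ∈ Finset.Icc 1 T, Real.log (1 + α * s t) := by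
    rw [Finset.mul_sum]
    apply Finset.sum_le_sum
    intro t ht
    have h1 : r t ^ 2 ≤ 4 * β T ^ 2 * s t := by
      have h2 := hrs t ht
      have hsq : r t ^ 2 ≤ (2 * β t * Real.sqrt (s t)) ^ 2 := by
        apply pow_le_pow_left₀ (hr t) h2
      have hst : Real.sqrt (s t) ^ 2 = s t := Real.sq_sqrt (hs0 t).le
      have hβt : β t ≤ β T := hβmono (Finset.mem_Icc.mp ht).2
      have hβt2 : β t ^ 2 ≤ β T ^ 2 := pow_le_pow_left₀ (hβ t) hβt 2
      calc r t ^ 2 ≤ (2 * β t * Real.sqrt (s t)) ^ 2 := hsq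
        _ = 4 * β t ^ 2 * s t := by rw [mul_pow, mul_pow, hst]; ring
        _ ≤ 4 * β T ^ 2 * s t := by nlinarith [(hs0 t).le]
    have h3 : s t * L ≤ Real.log (1 + α * s t) := by
      have := log_lin_bound hα (hs0 t).le (hs1 t)
      rwa [mul_comm (s t) α] at this
    have h4 : s t ≤ Real.log (1 + α * s t) / L := by
      rw [le_div_iff₀ hL]; exact h3
    calc r t ^ 2 ≤ 4 * β T ^ 2 * s t := h1
      _ ≤ 4 * β T ^ 2 * (Real.log (1 + α * s t) / L) := by
          apply mul_le_mul_of_nonneg_left h4; positivity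
      _ = 4 * β T ^ 2 / L * Real.log (1 + α * s t) := by ring
  have hγ0 : 0 ≤ γ := by
    refine le_trans ?_ hγ
    apply mul_nonneg (by norm_num)
    apply Finset.sum_nonneg
    intro t _
    apply Real.log_nonneg
    nlinarith [(hs0 t).le, hα.le]
  have hfinal : S ^ 2 ≤ β T ^ 2 * ((8 / L) * T * γ) := by
    have hsum2 : ∑ t ∈ Finset.Icc 1 T, Real.log (1 + α * s t) ≤ 2 * γ := by linarith
    have h5 : ∑ t ∈ Finset.Icc 1 T, (r t) ^ 2 ≤ (4 * β T ^ 2 / L) * (2 * γ) := by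
      refine le_trans hsum ?_
      apply mul_le_mul_of_nonneg_left hsum2; positivity
    calc S ^ 2 ≤ (T : ℝ) * ∑ t ∈ Finset.Icc 1 T, (r t) ^ 2 := hCS
      _ ≤ (T : ℝ) * ((4 * β T ^ 2 / L) * (2 * γ)) := by
          apply mul_le_mul_of_nonneg_left h5; positivity
      _ = β T ^ 2 * ((8 / L) * T * γ) := by field_simp; ring
  have hrhs0 : 0 ≤ (8 / L) * T * γ := by positivity
  calc S = Real.sqrt (S ^ 2) := (Real.sqrt_sq hS0).symm
    _ ≤ Real.sqrt (β T ^ 2 * ((8 / L) * T * γ)) := Real.sqrt_le_sqrt hfinal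
    _ = β T * Real.sqrt ((8 / L) * T * γ) := by
        rw [Real.sqrt_mul (by positivity), Real.sqrt_sq (hβ T)]
end
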